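/- For a duplicial module M, the Connes operator B_n = Σ_{i=0}^n d_n κ_n^i : M_n → M_{n+1} satisfies b_{n+1} B_n + B_{n-1} b_n = 1 − π_n, where π_n = κ_n^n − b_{n+1}κ_n^n d_n is the Dwyer–Kan operator. -/
import Mathlib


open CategoryTheory

universe v u

/-- A duplicial module in a pre-additive category `C`: objects `M n` together with
face maps `δ n i : M (n+1) ⟶ M n` (representing `∂_{n+1,i}`, meaningful for `0 ≤ i ≤ n+1`)
and degeneracy maps `σ n i : M n ⟶ M (n+1)` (representing `s_{n,i}`, meaningful for
`0 ≤ i ≤ n+1`, so including the extra degeneracy `s_{n,n+1}`), satisfying the standard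
simplicial identities extended to include the extra degeneracy; the composite
`∂_{n+1,0} s_{n,n+1}` is the duplicial operator `t_n`.
Here `f ≫ g` denotes "first apply `f`, then `g`". -/
structure DupMod (C : Type u) [Category.{v} C] [Preadditive C] where
  M : ℕ → C
  δ : ∀ n : ℕ, ℕ → (M (n + 1) ⟶ M n)
  σ : ∀ n : ℕ, ℕ → (M n ⟶ M (n + 1))
  /-- `∂_{n+1,k} ∂_{n+2,j} = ∂_{n+1,j} ∂_{n+2,k+1}` for `j ≤ k ≤ n+1`. -/
  δδ : ∀ n j k, j ≤ k → k ≤ n + 1 →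
    δ (n + 1) j ≫ δ n k = δ (n + 1) (k + 1) ≫ δ n j
  /-- `∂_{n+2,j} s_{n+1,k+1} = s_{n,k} ∂_{n+1,j}` for `1 ≤ (k+1)-j ≤ n+1`,
  i.e. `j ≤ k ≤ n+j`, with `k ≤ n+1`. -/
  δσ_lt : ∀ n j k, j ≤ k → k ≤ n + j → k ≤ n + 1 →
    σ (n + 1) (k + 1) ≫ δ (n + 1) j = δ n j ≫ σ n k
  /-- `∂_{n+1,j} s_{n,j} = 1` for `j ≤ n+1`. -/
  δσ_self : ∀ n j, j ≤ n + 1 → σ n j ≫ δ n j = 𝟙 (M n)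
  /-- `∂_{n+1,j+1} s_{n,j} = 1` for `j ≤ n`. -/
  δσ_succ : ∀ n j, j ≤ n → σ n j ≫ δ n (j + 1) = 𝟙 (M n)
  /-- `∂_{n+2,j+1} s_{n+1,k} = s_{n,k} ∂_{n+1,j}` for `k < j ≤ n+1`. -/
  δσ_gt : ∀ n j k, k < j → j ≤ n + 1 →
    σ (n + 1) k ≫ δ (n + 1) (j + 1) = δ n j ≫ σ n k
  /-- `s_{n+1,j} s_{n,k} = s_{n+1,k+1} s_{n,j}` for `j ≤ k ≤ n+1`. -/
  σσ : ∀ n j k, j ≤ k → k ≤ n + 1 →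
    σ n k ≫ σ (n + 1) j = σ n j ≫ σ (n + 1) (k + 1)

/-- Iterated composition: `cpow f m = f ≫ f ≫ ⋯ ≫ f` (`m` factors), i.e. `f^m`. -/
def cpow {C : Type u} [Category.{v} C] {A : C} (f : A ⟶ A) : ℕ → (A ⟶ A)
  | 0 => 𝟙 A
  | m + 1 => f ≫ cpow f m

namespace DupMod

variable {C : Type u} [Category.{v} C] [Preadditive C] (X : DupMod C)

/-- The simplicial differential `b_{n+1} = ∑_{i=0}^{n+1} (-1)^i ∂_{n+1,i} : M_{n+1} → M_n`. -/
def b (n : ℕ) : X.M (n + 1) ⟶ X.M n :=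
  ∑ i ∈ Finset.range (n + 2), ((-1 : ℤ) ^ i) • X.δ n i

/-- The Dwyer–Kan differential `d_n = ∑_{i=0}^{n+1} (-1)^i s_{n,i} : M_n → M_{n+1}`. -/
def d (n : ℕ) : X.M n ⟶ X.M (n + 1) :=
  ∑ i ∈ Finset.range (n + 2), ((-1 : ℤ) ^ i) • X.σ n i

/-- The duplicial operator `t_n = ∂_{n+1,0} s_{n,n+1} : M_n → M_n`. -/
def t (n : ℕ) : X.M n ⟶ X.M n := X.σ n (n + 1) ≫ X.δ n 0

/-- The Karoubi operator `κ_n = (-1)^n (∂_{n+1,0} s_{n,n+1} - s_{n-1,n} ∂_{n,0}) : M_n → M_n`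
(for `n = 0` the second term is absent). -/
def κ : ∀ n : ℕ, X.M n ⟶ X.M n
  | 0 => X.σ 0 1 ≫ X.δ 0 0
  | n + 1 => ((-1 : ℤ) ^ (n + 1)) •
      (X.σ (n + 1) (n + 2) ≫ X.δ (n + 1) 0 - X.δ n 0 ≫ X.σ n (n + 1))

end DupMod


namespace DupMod

variable {C : Type u} [Category.{v} C] [Preadditive C] (X : DupMod C)

lemma sign_cancel {A B : C} (h : A ⟶ B) (a c : ℕ) (hac : a + 1 = c ∨ c + 1 = a) :
    ((-1 : ℤ) ^ a) • h + ((-1 : ℤ) ^ c) • h = 0 := by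
  rcases hac with rfl | rfl
  · rw [pow_succ, mul_neg_one, neg_smul, add_neg_cancel]
  · rw [pow_succ, mul_neg_one, neg_smul, neg_add_cancel]

lemma b_b (n : ℕ) : X.b (n + 1) ≫ X.b n = 0 := by
  rw [b, b, Preadditive.sum_comp]
  simp only [Preadditive.zsmul_comp, Preadditive.comp_sum, Preadditive.comp_zsmul,
    smul_smul, ← pow_add]
  rw [← Finset.sum_product']
  refine Finset.sum_involution
    (fun p _ => if p.2 < p.1 then (p.2, p.1 - 1) else (p.2 + 1, p.1)) ?_ ?_ ?_ ?_
  · rintro ⟨i, j⟩ hp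
    simp only [Finset.mem_product, Finset.mem_range] at hp
    dsimp only
    by_cases h : j < i
    · rw [if_pos h]
      have hδ : X.δ (n + 1) i ≫ X.δ n j = X.δ (n + 1) j ≫ X.δ n (i - 1) := by
        have := (X.δδ n j (i - 1) (by omega) (by omega)).symm
        rwa [Nat.sub_add_cancel (by omega : 1 ≤ i)] at this
      rw [hδ]
      exact sign_cancel _ _ _ (by omega)
    · rw [if_neg h]
      push_neg at h
      rw [X.δδ n i j h (by omega)]
      exact sign_cancel _ _ _ (by omega)
  · rintro ⟨i, j⟩ hp _
    dsimp only
    by_cases h : j < i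
    · rw [if_pos h]; simp [Prod.ext_iff]; omega
    · rw [if_neg h]; simp [Prod.ext_iff]; omega
  · rintro ⟨i, j⟩ hp
    simp only [Finset.mem_product, Finset.mem_range] at hp ⊢
    by_cases h : j < i
    · rw [if_pos h]; simp; omega
    · rw [if_neg h]; simp; omega
  · rintro ⟨i, j⟩ hp
    simp only [Finset.mem_product, Finset.mem_range] at hp
    dsimp only
    by_cases h : j < i
    · rw [if_pos h, if_neg (by simp; omega : ¬ (i - 1 < j))]
      simp; omega
    · rw [if_neg h, if_pos (by omega : i < j + 1)]; simp

lemma d_d (n : ℕ) : X.d n ≫ X.d (n + 1) = 0 := by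
  rw [d, d, Preadditive.sum_comp]
  simp only [Preadditive.zsmul_comp, Preadditive.comp_sum, Preadditive.comp_zsmul,
    smul_smul, ← pow_add]
  rw [← Finset.sum_product']
  refine Finset.sum_involution
    (fun p _ => if p.2 ≤ p.1 then (p.2, p.1 + 1) else (p.2 - 1, p.1)) ?_ ?_ ?_ ?_
  · rintro ⟨i, j⟩ hp
    simp only [Finset.mem_product, Finset.mem_range] at hp
    dsimp only
    by_cases h : j ≤ i
    · rw [if_pos h]
      rw [X.σσ n j i h (by omega)]
      exact sign_cancel _ _ _ (by omega)
    · rw [if_neg h]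
      have hσ : X.σ n (j - 1) ≫ X.σ (n + 1) i = X.σ n i ≫ X.σ (n + 1) j := by
        have := X.σσ n i (j - 1) (by omega) (by omega)
        rwa [Nat.sub_add_cancel (by omega : 1 ≤ j)] at this
      rw [hσ]
      exact sign_cancel _ _ _ (by omega)
  · rintro ⟨i, j⟩ hp _
    dsimp only
    by_cases h : j ≤ i
    · rw [if_pos h]; simp [Prod.ext_iff]; omega
    · rw [if_neg h]; simp [Prod.ext_iff]; omega
  · rintro ⟨i, j⟩ hp
    simp only [Finset.mem_product, Finset.mem_range] at hp ⊢
    by_cases h : j ≤ i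
    · rw [if_pos h]; simp; omega
    · rw [if_neg h]; simp; omega
  · rintro ⟨i, j⟩ hp
    simp only [Finset.mem_product, Finset.mem_range] at hp
    dsimp only
    by_cases h : j ≤ i
    · rw [if_pos h, if_neg (by simp; omega : ¬ ((j, i+1).2 ≤ (j, i+1).1))]
      simp
    · rw [if_neg h, if_pos (by simp; omega : (j - 1, i).2 ≤ (j - 1, i).1)]
      simp; omega

lemma sign_flip {A B : C} (h : A ⟶ B) (a c : ℕ) (hac : c + 1 = a) :
    ((-1 : ℤ) ^ a) • h = -(((-1 : ℤ) ^ c) • h) := by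
  subst hac; rw [pow_succ, mul_neg_one, neg_smul]

lemma db_bd (m : ℕ) :
    X.d (m + 1) ≫ X.b (m + 1) + X.b m ≫ X.d m = 𝟙 (X.M (m + 1)) - X.κ (m + 1) := by
  classical
  have h1 : X.d (m + 1) ≫ X.b (m + 1)
      = ∑ p ∈ Finset.range (m + 1 + 2) ×ˢ Finset.range (m + 1 + 2),
          ((-1 : ℤ) ^ (p.2 + p.1)) • (X.σ (m + 1) p.1 ≫ X.δ (m + 1) p.2) := by
    rw [d, b, Preadditive.sum_comp]
    simp only [Preadditive.zsmul_comp, Preadditive.comp_sum, Preadditive.comp_zsmul,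
      smul_smul, ← pow_add]
    rw [← Finset.sum_product']
  have h2 : X.b m ≫ X.d m
      = ∑ p ∈ Finset.range (m + 2) ×ˢ Finset.range (m + 2),
          ((-1 : ℤ) ^ (p.2 + p.1)) • (X.δ m p.1 ≫ X.σ m p.2) := by
    rw [d, b, Preadditive.sum_comp]
    simp only [Preadditive.zsmul_comp, Preadditive.comp_sum, Preadditive.comp_zsmul,
      smul_smul, ← pow_add]
    rw [← Finset.sum_product']
  set S3 := Finset.range (m + 1 + 2) ×ˢ Finset.range (m + 1 + 2) with hS3
  set S2 := Finset.range (m + 2) ×ˢ Finset.range (m + 2) with hS2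
  set F : ℕ × ℕ → (X.M (m+1) ⟶ X.M (m+1)) :=
    fun p => ((-1 : ℤ) ^ (p.2 + p.1)) • (X.σ (m + 1) p.1 ≫ X.δ (m + 1) p.2) with hF
  set G : ℕ × ℕ → (X.M (m+1) ⟶ X.M (m+1)) :=
    fun p => ((-1 : ℤ) ^ (p.2 + p.1)) • (X.δ m p.1 ≫ X.σ m p.2) with hG
  -- split S3 sum
  have split1 : ∑ p ∈ S3, F p
      = ∑ p ∈ S3.filter (fun p => p.2 = p.1), F p
        + ∑ p ∈ S3.filter (fun p => ¬ p.2 = p.1), F p :=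
    (Finset.sum_filter_add_sum_filter_not S3 _ F).symm
  have split2 : ∑ p ∈ S3.filter (fun p => ¬ p.2 = p.1), F p
      = ∑ p ∈ (S3.filter (fun p => ¬ p.2 = p.1)).filter (fun p => p.2 = p.1 + 1), F p
        + ∑ p ∈ (S3.filter (fun p => ¬ p.2 = p.1)).filter (fun p => ¬ p.2 = p.1 + 1), F p :=
    (Finset.sum_filter_add_sum_filter_not _ _ F).symm
  have split3 : ∑ p ∈ (S3.filter (fun p => ¬ p.2 = p.1)).filter (fun p => ¬ p.2 = p.1 + 1), F p
      = ∑ p ∈ ((S3.filter (fun p => ¬ p.2 = p.1)).filter (fun p => ¬ p.2 = p.1 + 1)).filter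
            (fun p => p = (m + 2, 0)), F p
        + ∑ p ∈ ((S3.filter (fun p => ¬ p.2 = p.1)).filter (fun p => ¬ p.2 = p.1 + 1)).filter
            (fun p => ¬ p = (m + 2, 0)), F p :=
    (Finset.sum_filter_add_sum_filter_not _ _ F).symm
  have split4 : ∑ p ∈ S2, G p
      = ∑ p ∈ S2.filter (fun p => p = ((0 : ℕ), m + 1)), G p
        + ∑ p ∈ S2.filter (fun p => ¬ p = ((0 : ℕ), m + 1)), G p :=
    (Finset.sum_filter_add_sum_filter_not S2 _ G).symm
  -- diagonal
  have hA : ∑ p ∈ S3.filter (fun p => p.2 = p.1), F p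
      = ∑ _i ∈ Finset.range (m + 1 + 2), 𝟙 (X.M (m + 1)) := by
    refine Finset.sum_nbij' (fun p => p.1) (fun i => (i, i)) ?_ ?_ ?_ ?_ ?_
    · rintro ⟨i, j⟩ hp
      simp only [hS3, Finset.mem_filter, Finset.mem_product, Finset.mem_range] at hp ⊢
      omega
    · intro i hi
      simp only [Finset.mem_range] at hi
      simp [hS3, Finset.mem_product]
      omega
    · rintro ⟨i, j⟩ hp
      simp only [hS3, Finset.mem_filter, Finset.mem_product, Finset.mem_range] at hp
      simp [hp.2]
    · intro i hi; rfl
    · rintro ⟨i, j⟩ hp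
      simp only [hS3, Finset.mem_filter, Finset.mem_product, Finset.mem_range] at hp
      obtain ⟨⟨hi, hj⟩, hji⟩ := hp
      subst hji
      simp only [hF]
      rw [X.δσ_self (m + 1) j (by omega)]
      rw [Even.neg_one_pow ⟨j, rfl⟩, one_smul]
  have hB : ∑ p ∈ (S3.filter (fun p => ¬ p.2 = p.1)).filter (fun p => p.2 = p.1 + 1), F p
      = ∑ _i ∈ Finset.range (m + 2), -(𝟙 (X.M (m + 1))) := by
    refine Finset.sum_nbij' (fun p => p.1) (fun i => (i, i + 1)) ?_ ?_ ?_ ?_ ?_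
    · rintro ⟨i, j⟩ hp
      simp only [hS3, Finset.mem_filter, Finset.mem_product, Finset.mem_range] at hp ⊢
      omega
    · intro i hi
      simp only [Finset.mem_range] at hi
      simp [hS3, Finset.mem_product]
      omega
    · rintro ⟨i, j⟩ hp
      simp only [hS3, Finset.mem_filter, Finset.mem_product, Finset.mem_range] at hp
      simp [hp.2]
    · intro i hi; rfl
    · rintro ⟨i, j⟩ hp
      simp only [hS3, Finset.mem_filter, Finset.mem_product, Finset.mem_range] at hp
      obtain ⟨⟨⟨hi, hj⟩, hne⟩, hji⟩ := hp
      subst hji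
      simp only [hF]
      rw [X.δσ_succ (m + 1) i (by omega)]
      rw [Odd.neg_one_pow ⟨i, by omega⟩, neg_smul, one_smul]
  have hC : ((S3.filter (fun p => ¬ p.2 = p.1)).filter (fun p => ¬ p.2 = p.1 + 1)).filter
        (fun p => p = (m + 2, 0)) = {((m + 2 : ℕ), (0 : ℕ))} := by
    ext ⟨i, j⟩
    simp only [hS3, Finset.mem_filter, Finset.mem_product, Finset.mem_range,
      Finset.mem_singleton, Prod.ext_iff]
    omega
  have hD : ∑ p ∈ ((S3.filter (fun p => ¬ p.2 = p.1)).filter (fun p => ¬ p.2 = p.1 + 1)).filter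
        (fun p => ¬ p = (m + 2, 0)), F p
      = ∑ p ∈ S2.filter (fun p => ¬ p = ((0 : ℕ), m + 1)), -(G p) := by
    refine Finset.sum_nbij'
      (fun p => if p.2 < p.1 then (p.2, p.1 - 1) else (p.2 - 1, p.1))
      (fun p => if p.1 ≤ p.2 then (p.2 + 1, p.1) else (p.2, p.1 + 1)) ?_ ?_ ?_ ?_ ?_
    · rintro ⟨i, j⟩ hp
      simp only [hS3, Finset.mem_filter, Finset.mem_product, Finset.mem_range,
        Prod.ext_iff] at hp
      beta_reduce
      split_ifs <;>
        simp only [hS2, Finset.mem_filter, Finset.mem_product, Finset.mem_range,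
          Prod.mk.injEq] <;> omega
    · rintro ⟨p, q⟩ hp
      simp only [hS2, Finset.mem_filter, Finset.mem_product, Finset.mem_range,
        Prod.ext_iff] at hp
      beta_reduce
      split_ifs <;>
        simp only [hS3, Finset.mem_filter, Finset.mem_product, Finset.mem_range,
          Prod.mk.injEq] <;> omega
    · rintro ⟨i, j⟩ hp
      simp only [hS3, Finset.mem_filter, Finset.mem_product, Finset.mem_range,
        Prod.mk.injEq] at hp
      beta_reduce
      by_cases h : j < i
      · rw [if_pos h]
        dsimp only
        rw [if_pos (show j ≤ i - 1 by omega)]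
        simp only [Prod.mk.injEq, and_true, true_and]
        omega
      · rw [if_neg h]
        dsimp only
        rw [if_neg (show ¬ j - 1 ≤ i by omega)]
        simp only [Prod.mk.injEq, and_true, true_and]
        omega
    · rintro ⟨p, q⟩ hp
      simp only [hS2, Finset.mem_filter, Finset.mem_product, Finset.mem_range,
        Prod.mk.injEq] at hp
      beta_reduce
      by_cases h : p ≤ q
      · rw [if_pos h]
        dsimp only
        rw [if_pos (show p < q + 1 by omega)]
        simp only [Prod.mk.injEq, and_true, true_and]
        omega
      · rw [if_neg h]
        dsimp only
        rw [if_neg (show ¬ p + 1 < q by omega)]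
        simp only [Prod.mk.injEq, and_true, true_and]
        omega
    · rintro ⟨i, j⟩ hp
      simp only [hS3, Finset.mem_filter, Finset.mem_product, Finset.mem_range,
        Prod.ext_iff] at hp
      beta_reduce
      by_cases h : j < i
      · rw [if_pos h]
        simp only [hF, hG]
        have hσδ : X.σ (m + 1) i ≫ X.δ (m + 1) j = X.δ m j ≫ X.σ m (i - 1) := by
          have := X.δσ_lt m j (i - 1) (by omega) (by omega) (by omega)
          rwa [Nat.sub_add_cancel (by omega : 1 ≤ i)] at this
        rw [hσδ]
        exact sign_flip _ _ _ (by omega)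
      · rw [if_neg h]
        simp only [hF, hG]
        have hσδ : X.σ (m + 1) i ≫ X.δ (m + 1) j = X.δ m (j - 1) ≫ X.σ m i := by
          have := X.δσ_gt m (j - 1) i (by omega) (by omega)
          rwa [Nat.sub_add_cancel (by omega : 1 ≤ j)] at this
        rw [hσδ]
        exact sign_flip _ _ _ (by omega)
  have hE : S2.filter (fun p => p = ((0 : ℕ), m + 1)) = {((0 : ℕ), m + 1)} := by
    ext ⟨i, j⟩
    simp only [hS2, Finset.mem_filter, Finset.mem_product, Finset.mem_range,
      Finset.mem_singleton, Prod.ext_iff]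
    omega
  rw [h1, h2, split1, split2, split3, split4, hA, hB, hC, hD, hE,
    Finset.sum_singleton, Finset.sum_singleton, Finset.sum_const, Finset.sum_const,
    Finset.card_range, Finset.card_range]
  rw [Finset.sum_neg_distrib]
  have hκ : X.κ (m + 1) = ((-1 : ℤ) ^ (m + 1)) •
      (X.σ (m + 1) (m + 2) ≫ X.δ (m + 1) 0 - X.δ m 0 ≫ X.σ m (m + 1)) := rfl
  rw [hκ]
  simp only [hF, hG]
  have hsgn1 : ((-1 : ℤ) ^ (((m + 2 : ℕ), (0 : ℕ)).2 + ((m + 2 : ℕ), (0 : ℕ)).1))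
      = -(-1 : ℤ) ^ (m + 1) := by
    simp [pow_succ]
  have hsgn2 : ((-1 : ℤ) ^ ((((0 : ℕ), m + 1)).2 + (((0 : ℕ), m + 1)).1))
      = (-1 : ℤ) ^ (m + 1) := by simp
  rw [hsgn1, hsgn2]
  have hcard : (m + 1 + 2) = (m + 2) + 1 := by omega
  rw [hcard, succ_nsmul, smul_neg, smul_sub, neg_smul]
  abel

lemma db_zero : X.d 0 ≫ X.b 0 = 𝟙 (X.M 0) - X.κ 0 := by
  have hκ : X.κ 0 = X.σ 0 1 ≫ X.δ 0 0 := rfl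
  rw [d, b, hκ]
  rw [show Finset.range (0 + 2) = Finset.range (0 + 1 + 1) from rfl]
  simp only [Finset.sum_range_succ, Finset.sum_range_zero, zero_add, pow_zero, pow_one,
    one_smul, neg_smul, Preadditive.add_comp, Preadditive.comp_add,
    Preadditive.neg_comp, Preadditive.comp_neg, neg_neg]
  rw [X.δσ_self 0 0 (by omega), X.δσ_succ 0 0 (by omega), X.δσ_self 0 1 (by omega)]
  abel

lemma κ_succ (n : ℕ) :
    X.κ (n + 1) = 𝟙 (X.M (n + 1)) - X.d (n + 1) ≫ X.b (n + 1) - X.b n ≫ X.d n := by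
  rw [sub_sub, X.db_bd n]
  abel

lemma κ_zero : X.κ 0 = 𝟙 (X.M 0) - X.d 0 ≫ X.b 0 := by
  have h := X.db_zero
  rw [h]
  abel

lemma b_b_assoc (n : ℕ) {Z : C} (h : X.M n ⟶ Z) :
    X.b (n + 1) ≫ X.b n ≫ h = 0 := by
  rw [← Category.assoc, X.b_b, Limits.zero_comp]

lemma d_d_assoc (n : ℕ) {Z : C} (h : X.M (n + 2) ⟶ Z) :
    X.d n ≫ X.d (n + 1) ≫ h = 0 := by
  rw [← Category.assoc, X.d_d, Limits.zero_comp]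

lemma b_κ : ∀ n : ℕ, X.b n ≫ X.κ n = X.κ (n + 1) ≫ X.b n := by
  intro n
  match n with
  | 0 =>
    rw [X.κ_zero, X.κ_succ 0]
    simp only [Preadditive.comp_sub, Preadditive.sub_comp, Category.comp_id,
      Category.id_comp, Category.assoc, X.b_b, X.b_b_assoc, Limits.comp_zero,
      Limits.zero_comp, sub_zero]
  | m + 1 =>
    rw [X.κ_succ m, X.κ_succ (m + 1)]
    simp only [Preadditive.comp_sub, Preadditive.sub_comp, Category.comp_id,
      Category.id_comp, Category.assoc, X.b_b, X.b_b_assoc, Limits.comp_zero,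
      Limits.zero_comp, sub_zero]

lemma d_κ : ∀ n : ℕ, X.d n ≫ X.κ (n + 1) = X.κ n ≫ X.d n := by
  intro n
  match n with
  | 0 =>
    rw [X.κ_zero, X.κ_succ 0]
    simp only [Preadditive.comp_sub, Preadditive.sub_comp, Category.comp_id,
      Category.id_comp, Category.assoc, X.d_d, X.d_d_assoc, Limits.comp_zero,
      Limits.zero_comp, sub_zero]
  | m + 1 =>
    rw [X.κ_succ m, X.κ_succ (m + 1)]
    simp only [Preadditive.comp_sub, Preadditive.sub_comp, Category.comp_id,
      Category.id_comp, Category.assoc, X.d_d, X.d_d_assoc, Limits.comp_zero,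
      Limits.zero_comp, sub_zero]

lemma cpow_comm {A B : C} (u : A ⟶ B) (f : A ⟶ A) (g : B ⟶ B)
    (h : u ≫ g = f ≫ u) : ∀ k : ℕ, u ≫ cpow g k = cpow f k ≫ u := by
  intro k
  induction k with
  | zero => simp [cpow]
  | succ k ih =>
    show u ≫ g ≫ cpow g k = (f ≫ cpow f k) ≫ u
    rw [← Category.assoc, h, Category.assoc, ih, ← Category.assoc]

lemma cpow_succ' {A : C} (f : A ⟶ A) : ∀ k : ℕ, cpow f (k + 1) = cpow f k ≫ f := by
  intro k
  induction k with
  | zero => show f ≫ 𝟙 A = 𝟙 A ≫ f; simp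
  | succ k ih =>
    show f ≫ cpow f (k + 1) = (f ≫ cpow f k) ≫ f
    rw [ih, ← Category.assoc]

end DupMod

/-- The Connes operator `B_n = ∑_{i=0}^n d_n κ_n^i : M_n → M_{n+1}`. -/
def DupMod.Bop {C : Type u} [Category.{v} C] [Preadditive C] (X : DupMod C) (n : ℕ) :
    X.M n ⟶ X.M (n + 1) :=
  ∑ i ∈ Finset.range (n + 1), cpow (X.κ n) i ≫ X.d n

/-- The Dwyer–Kan operator `π_n = κ_n^n − b_{n+1} κ_{n+1}^n d_n`. -/
def DupMod.π {C : Type u} [Category.{v} C] [Preadditive C] (X : DupMod C) (n : ℕ) :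
    X.M n ⟶ X.M n :=
  cpow (X.κ n) n - X.d n ≫ cpow (X.κ (n + 1)) n ≫ X.b n

/-- For a duplicial module `M`, the Connes operator
`B_n = ∑_{i=0}^n d_n κ_n^i` satisfies `b_{n+1} B_n + B_{n-1} b_n = 1 − π_n`
(at degree `0` the term `B_{-1}b_0` is absent). -/
theorem connes_homotopy {C : Type u} [Category.{v} C] [Preadditive C]
    (X : DupMod C) :
    (∀ n : ℕ, X.Bop (n + 1) ≫ X.b (n + 1) + X.b n ≫ X.Bop n
        = 𝟙 (X.M (n + 1)) - X.π (n + 1)) ∧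
    (X.Bop 0 ≫ X.b 0 = 𝟙 (X.M 0) - X.π 0) := by
  constructor
  · intro n
    have hL : X.Bop (n + 1) ≫ X.b (n + 1)
        = ∑ i ∈ Finset.range (n + 1 + 1),
            cpow (X.κ (n + 1)) i ≫ (X.d (n + 1) ≫ X.b (n + 1)) := by
      rw [DupMod.Bop, Preadditive.sum_comp]
      simp only [Category.assoc]
    have hR : X.b n ≫ X.Bop n
        = ∑ i ∈ Finset.range (n + 1), cpow (X.κ (n + 1)) i ≫ (X.b n ≫ X.d n) := by
      rw [DupMod.Bop, Preadditive.comp_sum]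
      refine Finset.sum_congr rfl fun i _ => ?_
      rw [← Category.assoc, ← Category.assoc,
        DupMod.cpow_comm (X.b n) (X.κ (n + 1)) (X.κ n) (X.b_κ n) i]
    rw [hL, hR, Finset.sum_range_succ]
    have hsum : ∑ i ∈ Finset.range (n + 1),
          cpow (X.κ (n + 1)) i ≫ (X.d (n + 1) ≫ X.b (n + 1))
        + ∑ i ∈ Finset.range (n + 1), cpow (X.κ (n + 1)) i ≫ (X.b n ≫ X.d n)
        = ∑ i ∈ Finset.range (n + 1),
            (cpow (X.κ (n + 1)) i - cpow (X.κ (n + 1)) (i + 1)) := by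
      rw [← Finset.sum_add_distrib]
      refine Finset.sum_congr rfl fun i _ => ?_
      rw [← Preadditive.comp_add, X.db_bd n, Preadditive.comp_sub, Category.comp_id,
        ← DupMod.cpow_succ']
    have htel : ∑ i ∈ Finset.range (n + 1),
          (cpow (X.κ (n + 1)) i - cpow (X.κ (n + 1)) (i + 1))
        = cpow (X.κ (n + 1)) 0 - cpow (X.κ (n + 1)) (n + 1) :=
      Finset.sum_range_sub' (fun i => cpow (X.κ (n + 1)) i) (n + 1)
    have hcomm : X.d (n + 1) ≫ cpow (X.κ (n + 1 + 1)) (n + 1) ≫ X.b (n + 1)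
        = cpow (X.κ (n + 1)) (n + 1) ≫ (X.d (n + 1) ≫ X.b (n + 1)) := by
      rw [← Category.assoc,
        DupMod.cpow_comm (X.d (n + 1)) (X.κ (n + 1)) (X.κ (n + 1 + 1)) (X.d_κ (n + 1)),
        Category.assoc]
    rw [add_right_comm, hsum, htel, DupMod.π, hcomm]
    have h0 : cpow (X.κ (n + 1)) 0 = 𝟙 (X.M (n + 1)) := rfl
    rw [h0]
    abel
  · rw [DupMod.Bop, DupMod.π]
    simp only [Finset.sum_range_succ, Finset.sum_range_zero, zero_add, cpow,
      Category.id_comp, Category.comp_id, Preadditive.add_comp, Limits.zero_comp]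
    simp only [X.db_zero]
    abel
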